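/- Let R > 0 and let f : ℝ → [0,1] be measurable, monotone nonincreasing, with f(s) = 1 for s < −R and f(s) = 0 for s > R. Define ω and ρ as: ω = ∫_0^∞ f − ∫_{−∞}^0 (1 − f), ρ(ξ) = ξ f(ξ) + ∫_ξ^∞ f(s) ds. Then for every ξ ∈ ℝ, |ρ(ξ) − ω f(ξ)| ≤ 2R f(ξ)(1 − f(ξ)). -/

import Mathlib

open MeasureTheory

/-!
Write `A = ∫_{-∞}^ξ (1 - f)` and `B = ∫_ξ^∞ f`. Since `A - B - ξ` does not depend on `ξ`
(its derivative is `(1 - f) + f - 1 = 0`), evaluating at `ξ = 0` gives `A - B = ξ - ω`, hence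
`ρ(ξ) - ω f(ξ) = f(ξ) A + (1 - f(ξ)) B`. Monotonicity bounds the integrands by their values at `ξ`
on intervals of lengths `ξ + R` and `R - ξ`, so `A ≤ (1 - f(ξ)) (ξ + R)` and `B ≤ f(ξ) (R - ξ)`;
the second bound is the first one for the reflected profile `s ↦ 1 - f(-s)`.
-/

open Set

theorem setIntegral_Iio_one_sub_sub_setIntegral_Ioi {f : ℝ → ℝ}
    (hIio : ∀ a, IntegrableOn (fun s => 1 - f s) (Iio a)) (hIoi : ∀ a, IntegrableOn f (Ioi a))
    (a b : ℝ) :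
    (∫ s in Iio b, (1 - f s)) - ∫ s in Ioi b, f s =
      (∫ s in Iio a, (1 - f s)) - (∫ s in Ioi a, f s) + (b - a) := by
  have hf : IntervalIntegrable f volume a b :=
    intervalIntegrable_iff.2 ((hIoi (min a b)).mono_set Ioc_subset_Ioi_self)
  have hsum : (∫ s in a..b, (1 - f s)) + ∫ s in a..b, f s = b - a := by
    rw [← intervalIntegral.integral_add (intervalIntegrable_const.sub hf) hf]
    simp
  have hIio_diff := intervalIntegral.integral_Iio_sub_Iio' (hIio b) (hIio a)
  have hIoi_diff := intervalIntegral.integral_Ioi_sub_Ioi' (hIoi a) (hIoi b)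
  linarith

structure IsAntitoneStep (R : ℝ) (f : ℝ → ℝ) : Prop where
  antitone : Antitone f
  eq_one : ∀ s, s < -R → f s = 1
  eq_zero : ∀ s, R < s → f s = 0

namespace IsAntitoneStep

variable {R : ℝ} {f : ℝ → ℝ}

theorem mem_Icc (hf : IsAntitoneStep R f) (s : ℝ) : f s ∈ Icc 0 1 := by
  constructor
  · rw [← hf.eq_zero (max s R + 1) (by linarith [le_max_right s R])]
    exact hf.antitone (by linarith [le_max_left s R])
  · rw [← hf.eq_one (min s (-R) - 1) (by linarith [min_le_right s (-R)])]
    exact hf.antitone (by linarith [min_le_left s (-R)])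

theorem reflect (hf : IsAntitoneStep R f) : IsAntitoneStep R (fun s => 1 - f (-s)) where
  antitone _ _ hst := by linarith [hf.antitone (neg_le_neg hst)]
  eq_one s hs := by rw [hf.eq_zero (-s) (by linarith), sub_zero]
  eq_zero s hs := by rw [hf.eq_one (-s) (by linarith), sub_self]

theorem integrableOn_one_sub_Iio (hf : IsAntitoneStep R f) (a : ℝ) :
    IntegrableOn (fun s => 1 - f s) (Iio a) := by
  have hbounded : IntegrableOn (fun s => 1 - f s) (Ico (-R) a) :=
    Measure.integrableOn_of_bounded (M := 1) measure_Ico_lt_top.ne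
      (measurable_const.sub hf.antitone.measurable).aestronglyMeasurable
      (Filter.Eventually.of_forall fun s => by
        obtain ⟨h0, h1⟩ := hf.mem_Icc s
        rw [Real.norm_eq_abs, abs_le]
        constructor <;> linarith)
  refine hbounded.of_forall_sdiff_eq_zero measurableSet_Iio fun s ⟨hsa, hs⟩ => ?_
  rw [hf.eq_one s (by_contra fun h => hs ⟨not_lt.1 h, hsa⟩), sub_self]

theorem integrableOn_Ioi (hf : IsAntitoneStep R f) (a : ℝ) : IntegrableOn f (Ioi a) := by
  have hbounded : IntegrableOn f (Ioc a R) :=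
    Measure.integrableOn_of_bounded (M := 1) measure_Ioc_lt_top.ne
      hf.antitone.measurable.aestronglyMeasurable
      (Filter.Eventually.of_forall fun s => by
        obtain ⟨h0, h1⟩ := hf.mem_Icc s
        rwa [Real.norm_eq_abs, abs_of_nonneg h0])
  exact hbounded.of_forall_sdiff_eq_zero measurableSet_Ioi fun s ⟨has, hs⟩ =>
    hf.eq_zero s (by_contra fun h => hs ⟨has, not_lt.1 h⟩)

theorem setIntegral_Iio_one_sub_le (hf : IsAntitoneStep R f) (ξ : ℝ) :
    ∫ s in Iio ξ, (1 - f s) ≤ (1 - f ξ) * (ξ + R) := by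
  rcases lt_or_ge ξ (-R) with hξ | hξ
  · rw [hf.eq_one ξ hξ, sub_self, zero_mul]
    refine (setIntegral_eq_zero_of_forall_eq_zero fun s hs => ?_).le
    rw [hf.eq_one s (lt_trans hs hξ), sub_self]
  calc ∫ s in Iio ξ, (1 - f s) = ∫ s in Ico (-R) ξ, (1 - f s) := by
        refine setIntegral_eq_of_subset_of_forall_sdiff_eq_zero measurableSet_Iio
          Ico_subset_Iio_self fun s ⟨hsξ, hs⟩ => ?_
        rw [hf.eq_one s (by_contra fun h => hs ⟨not_lt.1 h, hsξ⟩), sub_self]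
    _ ≤ ∫ s in Ico (-R) ξ, (1 - f ξ) :=
        setIntegral_mono_on ((hf.integrableOn_one_sub_Iio ξ).mono_set Ico_subset_Iio_self)
          (integrableOn_const measure_Ico_lt_top.ne) measurableSet_Ico
          fun s hs => by linarith [hf.antitone hs.2.le]
    _ = (1 - f ξ) * (ξ + R) := by
        rw [setIntegral_const, Real.volume_real_Ico_of_le hξ, smul_eq_mul]
        ring

theorem setIntegral_Ioi_le (hf : IsAntitoneStep R f) (ξ : ℝ) :
    ∫ s in Ioi ξ, f s ≤ f ξ * (R - ξ) := by
  have h := hf.reflect.setIntegral_Iio_one_sub_le (-ξ)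
  simp only [sub_sub_cancel, neg_neg, ← integral_Iic_eq_integral_Iio, integral_comp_neg_Iic] at h
  linarith

end IsAntitoneStep

theorem rho_minus_omega_f_bound_general
    (R : ℝ) (f : ℝ → ℝ) (hmono : Antitone f)
    (hleft : ∀ s, s < -R → f s = 1) (hright : ∀ s, R < s → f s = 0)
    (ω : ℝ) (hω : ω = (∫ s in Set.Ioi (0:ℝ), f s) - ∫ s in Set.Iio (0:ℝ), (1 - f s))
    (ρ : ℝ → ℝ) (hρ : ∀ ξ, ρ ξ = ξ * f ξ + ∫ s in Set.Ioi ξ, f s) :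
    ∀ ξ : ℝ, |ρ ξ - ω * f ξ| ≤ 2 * R * (f ξ * (1 - f ξ)) := by
  intro ξ
  have hf : IsAntitoneStep R f := ⟨hmono, hleft, hright⟩
  obtain ⟨hf0, hf1⟩ := hf.mem_Icc ξ
  have hdiff := setIntegral_Iio_one_sub_sub_setIntegral_Ioi hf.integrableOn_one_sub_Iio
    hf.integrableOn_Ioi 0 ξ
  have hdecomp : ρ ξ - ω * f ξ =
      f ξ * (∫ s in Iio ξ, (1 - f s)) + (1 - f ξ) * ∫ s in Ioi ξ, f s := by
    rw [hρ, hω]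
    linear_combination (-f ξ) * hdiff
  have hA0 : 0 ≤ ∫ s in Iio ξ, (1 - f s) :=
    setIntegral_nonneg measurableSet_Iio fun s _ => sub_nonneg.2 (hf.mem_Icc s).2
  have hB0 : 0 ≤ ∫ s in Ioi ξ, f s :=
    setIntegral_nonneg measurableSet_Ioi fun s _ => (hf.mem_Icc s).1
  rw [hdecomp, abs_of_nonneg (by positivity)]
  linear_combination (mul_le_mul_of_nonneg_left (hf.setIntegral_Iio_one_sub_le ξ) hf0) +
    mul_le_mul_of_nonneg_left (hf.setIntegral_Ioi_le ξ) (sub_nonneg.2 hf1)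

theorem rho_minus_omega_f_bound
    (R : ℝ) (hR : 0 < R) (f : ℝ → ℝ) (hmeas : Measurable f)
    (hrange : ∀ s, f s ∈ Set.Icc (0:ℝ) 1) (hmono : Antitone f)
    (hleft : ∀ s, s < -R → f s = 1) (hright : ∀ s, R < s → f s = 0)
    (ω : ℝ) (hω : ω = (∫ s in Set.Ioi (0:ℝ), f s) - ∫ s in Set.Iio (0:ℝ), (1 - f s))
    (ρ : ℝ → ℝ) (hρ : ∀ ξ, ρ ξ = ξ * f ξ + ∫ s in Set.Ioi ξ, f s) :
    ∀ ξ : ℝ, |ρ ξ - ω * f ξ| ≤ 2 * R * (f ξ * (1 - f ξ)) :=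
  rho_minus_omega_f_bound_general R f hmono hleft hright ω hω ρ hρ
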